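/- In the dihedral group $D_{2n}$ with $n=2^t m$, $t\ge 1$, $m$ odd, let $x$ be a reflection and $c$ an element of the rotation subgroup $C$. If the order of $[x,c]$ is a power of $2$, then there exists a positive integer $k$ with $[c,{}_k x]=1$. -/

import Mathlib

/-- The commutator `[a,b] = a⁻¹ b⁻¹ a b` (paper convention). -/
def cm {G : Type*} [Group G] (a b : G) : G := a⁻¹ * b⁻¹ * a * b

/-- Iterated (Engel) commutator: `engel a b 0 = a`, `engel a b (n+1) = [engel a b n, b]`,
so for `n ≥ 1`, `engel a b n = [a, ₙ b]`. -/
def engel {G : Type*} [Group G] (a b : G) : ℕ → G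
  | 0 => a
  | n + 1 => cm (engel a b n) b

namespace DihedralGroup
lemma inv_r' {n : ℕ} (a : ZMod n) : (r a)⁻¹ = r (-a) := rfl
lemma inv_sr' {n : ℕ} (a : ZMod n) : (sr a)⁻¹ = sr a := rfl
end DihedralGroup

lemma cm_r_sr {n : ℕ} (a i : ZMod n) :
    cm (DihedralGroup.r a) (DihedralGroup.sr i) = DihedralGroup.r (-2*a) := by
  simp [cm, DihedralGroup.inv_r', DihedralGroup.inv_sr']; ring

lemma cm_sr_r {n : ℕ} (i j : ZMod n) :
    cm (DihedralGroup.sr i) (DihedralGroup.r j) = DihedralGroup.r (2*j) := by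
  simp [cm, DihedralGroup.inv_r', DihedralGroup.inv_sr']; ring

lemma r_pow' {n : ℕ} (a : ZMod n) (p : ℕ) :
    (DihedralGroup.r a)^p = DihedralGroup.r ((p : ZMod n) * a) := by
  induction p with
  | zero => simp
  | succ k ih => rw [pow_succ, ih]; simp; ring

lemma engel_r_sr {n : ℕ} (j i : ZMod n) (k : ℕ) :
    engel (DihedralGroup.r j) (DihedralGroup.sr i) k = DihedralGroup.r ((-2)^k * j) := by
  induction k with
  | zero => simp [engel]
  | succ k ih => rw [engel, ih, cm_r_sr]; ring_nf

theorem stmt10 (t m : ℕ) (ht : 1 ≤ t) (hodd : Odd m)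
    (i j : ZMod (2 ^ t * m))
    (h : ∃ s : ℕ, orderOf (cm (DihedralGroup.sr i) (DihedralGroup.r j)) = 2 ^ s) :
    ∃ k, 1 ≤ k ∧ engel (DihedralGroup.r j) (DihedralGroup.sr i) k = 1 := by
  obtain ⟨s, hs⟩ := h
  have hm : 0 < m := hodd.pos
  have : NeZero (2 ^ t * m) := ⟨by positivity⟩
  rw [cm_sr_r] at hs
  -- the order divides the group cardinality `2 * (2^t * m)`
  have hdvd : (2:ℕ)^s ∣ 2 * (2 ^ t * m) := by
    rw [← hs, ← DihedralGroup.card]; exact orderOf_dvd_card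
  have hdvd2 : (2:ℕ)^s ∣ 2^(t+1) := by
    exact Nat.Coprime.dvd_of_dvd_mul_right (by
      simpa using (Nat.coprime_two_left.mpr hodd).pow_left s) (by
        rwa [← mul_assoc, ← pow_succ'] at hdvd)
  -- hence `(r (2j))^(2^(t+1)) = 1`
  have h1 : (DihedralGroup.r (2*j) : DihedralGroup (2^t*m))^(2^(t+1)) = 1 := by
    apply orderOf_dvd_iff_pow_eq_one.mp; rw [hs]; exact hdvd2
  rw [r_pow'] at h1
  have h2 : ((2:ZMod (2^t*m))^(t+1)) * (2*j) = 0 := by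
    rw [DihedralGroup.one_def] at h1
    exact_mod_cast DihedralGroup.r.injEq _ _ ▸ h1
  refine ⟨t+2, by omega, ?_⟩
  rw [engel_r_sr, DihedralGroup.one_def]
  congr 1
  have hneg : ((-2 : ZMod (2^t*m)))^(t+2) = (-1)^(t+2) * 2^(t+2) := by
    rw [← neg_one_mul, mul_pow]
  rw [hneg]
  have h3 : ((2:ZMod (2^t*m))^(t+2)) * j = 0 := by
    rw [pow_succ]
    calc (2:ZMod (2^t*m))^(t+1) * 2 * j = 2^(t+1) * (2*j) := by ring
    _ = 0 := h2
  rw [mul_assoc, h3, mul_zero]
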